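/- Let p_1, …, p_r be distinct primes (r ≥ 0 is allowed) and N = p_1 ⋯ p_r. Define ξ(s) = (1/2) s (s − 1) π^{−s/2} Γ(s/2) ζ(s). Then the function φ_N(s) = ( s/(s−1) ) · ( ξ(2s−1)/ξ(2s) ) · N^{−s} · ∏_{j=1}^{r} (p_j^{s} + p_j)/(p_j^{s} + 1) tends to −1 as s → 1/2 with s ≠ 1/2. -/

import Mathlib

open Complex Filter

/-- The completed Riemann zeta function `ξ(s) = (1/2) s (s−1) π^{−s/2} Γ(s/2) ζ(s)`. -/
noncomputable def xi (s : ℂ) : ℂ :=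
  (1 / 2) * s * (s - 1) * (Real.pi : ℂ) ^ (-s / 2) * Complex.Gamma (s / 2) * riemannZeta s

open Topology in
lemma aux_map_two_mul_sub_one :
    Tendsto (fun s : ℂ => 2 * s - 1) (𝓝[≠] (1/2 : ℂ)) (𝓝[≠] (0:ℂ)) := by
  rw [tendsto_nhdsWithin_iff]
  constructor
  · have h : Tendsto (fun s : ℂ => 2 * s - 1) (𝓝 (1/2)) (𝓝 (2 * (1/2) - 1)) :=
      ((continuous_const.mul continuous_id).sub continuous_const).tendsto _
    norm_num at h
    exact h.mono_left nhdsWithin_le_nhds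
  · filter_upwards [self_mem_nhdsWithin] with s hs
    simp only [Set.mem_compl_iff, Set.mem_singleton_iff] at hs ⊢
    intro h; exact hs (by linear_combination h / 2)

open Topology in
lemma aux_map_two_mul :
    Tendsto (fun s : ℂ => 2 * s) (𝓝[≠] (1/2 : ℂ)) (𝓝[≠] (1:ℂ)) := by
  rw [tendsto_nhdsWithin_iff]
  constructor
  · have h : Tendsto (fun s : ℂ => 2 * s) (𝓝 (1/2)) (𝓝 (2 * (1/2))) :=
      (continuous_const.mul continuous_id).tendsto _
    norm_num at h
    exact h.mono_left nhdsWithin_le_nhds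
  · filter_upwards [self_mem_nhdsWithin] with s hs
    simp only [Set.mem_compl_iff, Set.mem_singleton_iff] at hs ⊢
    intro h; exact hs (by linear_combination h / 2)

lemma aux_one_ne_neg_nat : ∀ m : ℕ, (1 : ℂ) ≠ -m := by
  intro m h
  have h2 : (1:ℝ) = -(m:ℝ) := by
    have := congrArg Complex.re h
    simpa using this
  have h3 : (0:ℝ) ≤ (m:ℝ) := Nat.cast_nonneg m
  linarith

set_option maxHeartbeats 1000000 in
open Topology in
lemma xi_tendsto_zero : Tendsto xi (𝓝[≠] (0:ℂ)) (𝓝 (1/2)) := by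
  have hpi : (Real.pi : ℂ) ≠ 0 := by exact_mod_cast Real.pi_ne_zero
  have c1 : ContinuousAt (fun w : ℂ => w - 1) 0 :=
    (continuous_id.sub continuous_const).continuousAt
  have c2 : ContinuousAt (fun w : ℂ => (Real.pi : ℂ) ^ (-w / 2)) 0 :=
    (continuousAt_const_cpow hpi).comp (continuous_id.neg.div_const 2).continuousAt
  have c3 : ContinuousAt (fun w : ℂ => Complex.Gamma (w / 2 + 1)) 0 := by
    have h1 : ContinuousAt Complex.Gamma ((0:ℂ) / 2 + 1) := by
      refine (Complex.differentiableAt_Gamma _ ?_).continuousAt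
      intro m
      simpa using aux_one_ne_neg_nat m
    have hf : ContinuousAt (fun w : ℂ => w / 2 + 1) 0 :=
      ((continuous_id.div_const 2).add continuous_const).continuousAt
    have key := ContinuousAt.comp (f := fun w : ℂ => w / 2 + 1) (x := (0:ℂ)) h1 hf
    exact key
  have c4 : ContinuousAt riemannZeta 0 :=
    (differentiableAt_riemannZeta (by norm_num)).continuousAt
  have hcont : ContinuousAt (fun w : ℂ => (w - 1) * (Real.pi : ℂ) ^ (-w / 2) *
      Complex.Gamma (w / 2 + 1) * riemannZeta w) 0 := ((c1.mul c2).mul c3).mul c4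
  have hval : ((0:ℂ) - 1) * (Real.pi : ℂ) ^ (-(0:ℂ) / 2) *
      Complex.Gamma ((0:ℂ) / 2 + 1) * riemannZeta 0 = 1/2 := by
    norm_num [Complex.Gamma_one, riemannZeta_zero]
  have h := hcont.tendsto.mono_left (nhdsWithin_le_nhds (s := {(0:ℂ)}ᶜ))
  rw [hval] at h
  refine h.congr' ?_
  filter_upwards [self_mem_nhdsWithin] with w hw
  have hw0 : w ≠ 0 := hw
  have h2 : (w / 2 : ℂ) ≠ 0 := div_ne_zero hw0 two_ne_zero
  simp only [Complex.Gamma_add_one _ h2, xi]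
  ring

set_option maxHeartbeats 1000000 in
open Topology in
lemma xi_two_mul_tendsto :
    Tendsto (fun s : ℂ => xi (2 * s)) (𝓝[≠] (1/2 : ℂ)) (𝓝 (1/2)) := by
  have hpi : (Real.pi : ℂ) ≠ 0 := by exact_mod_cast Real.pi_ne_zero
  have c1 : ContinuousAt (fun s : ℂ => (1/2 : ℂ) * (2 * s)) (1/2) :=
    (continuous_const.mul (continuous_const.mul continuous_id)).continuousAt
  have c2 : ContinuousAt (fun s : ℂ => (Real.pi : ℂ) ^ (-(2 * s) / 2)) (1/2) :=
    (continuousAt_const_cpow hpi).comp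
      ((continuous_const.mul continuous_id).neg.div_const 2).continuousAt
  have c3 : ContinuousAt (fun s : ℂ => Complex.Gamma ((2 * s) / 2)) (1/2) := by
    have h1 : ContinuousAt Complex.Gamma ((2 * (1/2 : ℂ)) / 2) := by
      refine (Complex.differentiableAt_Gamma _ ?_).continuousAt
      intro m h
      rw [show (2 * (1/2:ℂ))/2 = ((1/2 : ℝ) : ℂ) by norm_num] at h
      have h2 : (1/2:ℝ) = -(m:ℝ) := by exact_mod_cast h
      have h3 : (0:ℝ) ≤ (m:ℝ) := Nat.cast_nonneg m
      linarith
    have hf : ContinuousAt (fun s : ℂ => (2 * s) / 2) (1/2) :=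
      ((continuous_const.mul continuous_id).div_const 2).continuousAt
    have key := ContinuousAt.comp (f := fun s : ℂ => (2 * s) / 2) (x := (1/2:ℂ)) h1 hf
    exact key
  have hc : ContinuousAt (fun s : ℂ => (1/2 : ℂ) * (2 * s) * (Real.pi : ℂ) ^ (-(2 * s) / 2) *
      Complex.Gamma ((2 * s) / 2)) (1/2) := (c1.mul c2).mul c3
  have hv : (1/2 : ℂ) * (2 * (1/2)) * (Real.pi : ℂ) ^ (-(2 * (1/2 : ℂ)) / 2) *
      Complex.Gamma ((2 * (1/2 : ℂ)) / 2) = 1/2 := by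
    have e1 : (-(2 * (1/2 : ℂ)) / 2) = -(1/2 : ℂ) := by norm_num
    have e2 : ((2 * (1/2 : ℂ)) / 2) = (1/2 : ℂ) := by norm_num
    have hne : (Real.pi : ℂ) ^ (1/2 : ℂ) ≠ 0 := by
      simp [Complex.cpow_eq_zero_iff, hpi]
    rw [e1, e2, Complex.Gamma_one_half_eq, Complex.cpow_neg,
      mul_assoc, inv_mul_cancel₀ hne]
    norm_num
  have hA : Tendsto (fun s : ℂ => (1/2 : ℂ) * (2 * s) * (Real.pi : ℂ) ^ (-(2 * s) / 2) *
      Complex.Gamma ((2 * s) / 2)) (𝓝 (1/2 : ℂ)) (𝓝 (1/2)) := by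
    have hA0 := hc.tendsto
    rw [hv] at hA0
    exact hA0
  have hB : Tendsto (fun s : ℂ => (2 * s - 1) * riemannZeta (2 * s))
      (𝓝[≠] (1/2 : ℂ)) (𝓝 1) := by
    have := riemannZeta_residue_one.comp aux_map_two_mul
    simpa [Function.comp_def] using this
  have h := (hA.mono_left nhdsWithin_le_nhds).mul hB
  norm_num at h
  refine h.congr fun s => ?_
  simp only [xi]
  ring

set_option maxHeartbeats 1000000 in
open Topology in
/-- For distinct primes `p₁, …, p_r` and `N = p₁ ⋯ p_r`, the scattering determinant
`φ_N(s) = (s/(s−1)) (ξ(2s−1)/ξ(2s)) N^{−s} ∏ⱼ (pⱼ^s + pⱼ)/(pⱼ^s + 1)` of `Γ₀(N)⁺`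
tends to `−1` as `s → 1/2`, `s ≠ 1/2`. -/
theorem fricke_scattering_at_half (r : ℕ) (p : Fin r → ℕ)
    (hp : ∀ j, (p j).Prime) (hinj : Function.Injective p)
    (N : ℕ) (hN : N = ∏ j, p j) :
    Filter.Tendsto
      (fun s : ℂ => (s / (s - 1)) * (xi (2 * s - 1) / xi (2 * s)) * (N : ℂ) ^ (-s) *
        ∏ j, (((p j : ℂ) ^ s + (p j : ℂ)) / ((p j : ℂ) ^ s + 1)))
      (nhdsWithin (1 / 2 : ℂ) {(1 / 2 : ℂ)}ᶜ) (nhds (-1)) := by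
  have hNpos : 0 < N := by
    rw [hN]; exact Finset.prod_pos fun j _ => (hp j).pos
  have hN0 : (N : ℂ) ≠ 0 := Nat.cast_ne_zero.mpr hNpos.ne'
  -- factor 1
  have T1 : Tendsto (fun s : ℂ => s / (s - 1)) (𝓝[≠] (1/2 : ℂ)) (𝓝 (-1)) := by
    have hc : ContinuousAt (fun s : ℂ => s / (s - 1)) (1/2) :=
      continuousAt_id.div ((continuous_id.sub continuous_const).continuousAt) (by norm_num)
    have h := hc.tendsto.mono_left (nhdsWithin_le_nhds (s := {(1/2:ℂ)}ᶜ))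
    have hv : (1/2 : ℂ) / ((1/2 : ℂ) - 1) = -1 := by norm_num
    rwa [hv] at h
  -- factor 2
  have T2 : Tendsto (fun s : ℂ => xi (2 * s - 1) / xi (2 * s)) (𝓝[≠] (1/2 : ℂ)) (𝓝 1) := by
    have h := Tendsto.div (xi_tendsto_zero.comp aux_map_two_mul_sub_one) xi_two_mul_tendsto
      (by norm_num : (1/2 : ℂ) ≠ 0)
    have hv : (1/2 : ℂ) / (1/2 : ℂ) = 1 := by norm_num
    rw [hv] at h
    exact h.congr fun s => by simp [Function.comp]
  -- factor 3
  have T3 : Tendsto (fun s : ℂ => (N : ℂ) ^ (-s)) (𝓝[≠] (1/2 : ℂ))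
      (𝓝 ((N : ℂ) ^ (-(1/2 : ℂ)))) := by
    have hc : ContinuousAt (fun s : ℂ => (N : ℂ) ^ (-s)) (1/2) :=
      (continuousAt_const_cpow hN0).comp continuous_neg.continuousAt
    exact hc.tendsto.mono_left nhdsWithin_le_nhds
  -- factor 4
  have hp0 : ∀ j, ((p j : ℂ)) ≠ 0 := fun j => Nat.cast_ne_zero.mpr (hp j).pos.ne'
  have hhalf : ∀ j, ((p j : ℂ)) ^ (1/2 : ℂ) = (((p j : ℝ) ^ (1/2 : ℝ) : ℝ) : ℂ) := by
    intro j
    rw [Complex.ofReal_cpow (Nat.cast_nonneg _)]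
    norm_num
  have hden : ∀ j, ((p j : ℂ)) ^ (1/2 : ℂ) + 1 ≠ 0 := by
    intro j h
    rw [hhalf j] at h
    have h1 := congrArg Complex.re h
    simp at h1
    have h2 : (0:ℝ) ≤ (p j : ℝ) ^ (1/2 : ℝ) := Real.rpow_nonneg (Nat.cast_nonneg _) _
    linarith
  have hfac : ∀ j, ((p j : ℂ) ^ (1/2 : ℂ) + (p j : ℂ)) / ((p j : ℂ) ^ (1/2 : ℂ) + 1)
      = (p j : ℂ) ^ (1/2 : ℂ) := by
    intro j
    have hsq : (p j : ℂ) ^ (1/2 : ℂ) * (p j : ℂ) ^ (1/2 : ℂ) = (p j : ℂ) := by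
      rw [← Complex.cpow_add _ _ (hp0 j)]
      norm_num
    rw [div_eq_iff (hden j), mul_add, mul_one, hsq, add_comm]
  have T4 : Tendsto (fun s : ℂ => ∏ j, (((p j : ℂ) ^ s + (p j : ℂ)) / ((p j : ℂ) ^ s + 1)))
      (𝓝[≠] (1/2 : ℂ)) (𝓝 (∏ j, (p j : ℂ) ^ (1/2 : ℂ))) := by
    refine Tendsto.mono_left ?_ nhdsWithin_le_nhds
    refine tendsto_finset_prod _ fun j _ => ?_
    have hc : ContinuousAt (fun s : ℂ => ((p j : ℂ) ^ s + (p j : ℂ)) /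
        ((p j : ℂ) ^ s + 1)) (1/2) := by
      refine ContinuousAt.div ?_ ?_ (hden j)
      · exact (continuousAt_const_cpow (hp0 j)).add continuousAt_const
      · exact (continuousAt_const_cpow (hp0 j)).add continuousAt_const
    have h := hc.tendsto
    rwa [hfac j] at h
  -- combine
  have H := ((T1.mul T2).mul T3).mul T4
  have hprod : (∏ j, (p j : ℂ) ^ (1/2 : ℂ)) = (((N : ℝ) ^ (1/2 : ℝ) : ℝ) : ℂ) := by
    have h1 : (∏ j, (p j : ℂ) ^ (1/2 : ℂ))
        = ((∏ j, ((p j : ℝ) ^ (1/2 : ℝ)) : ℝ) : ℂ) := by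
      rw [Complex.ofReal_prod]
      exact Finset.prod_congr rfl fun j _ => hhalf j
    rw [h1, Real.finset_prod_rpow _ _ (fun j _ => Nat.cast_nonneg _)]
    congr 2
    rw [hN]
    push_cast
    ring
  have hNc : (N : ℂ) ^ (-(1/2 : ℂ)) = (((N : ℝ) ^ (-(1/2 : ℝ)) : ℝ) : ℂ) := by
    rw [Complex.ofReal_cpow (Nat.cast_nonneg _)]
    norm_num
  have hr : (N : ℝ) ^ (-(1/2 : ℝ)) * (N : ℝ) ^ (1/2 : ℝ) = 1 := by
    rw [← Real.rpow_add (by exact_mod_cast hNpos)]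
    norm_num
  have hval : (-1 : ℂ) * 1 * (N : ℂ) ^ (-(1/2 : ℂ)) * (∏ j, (p j : ℂ) ^ (1/2 : ℂ)) = -1 := by
    rw [hprod, hNc, mul_assoc, ← Complex.ofReal_mul, hr]
    norm_num
  rw [hval] at H
  exact H
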